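/- arXiv:2104.10407 — 4 statements merged into one kernel-verified Lean document; each statement's English description precedes it below -/
import Mathlib

section
/- Let G be a simple connected non-bipartite r-regular graph with n vertices, m edges, Laplacian eigenvalue λ with eigenvector x, and incidence matrix B. Let μ = (qr + λ - 2)² + 4q(2r - λ) and suppose λ ≠ 2r, and set y = (qr + λ - 2 ∓ √μ)/(2q(2r - λ)). Then f(λ) = (1/2)(qr + λ + 2 ± √μ) is an eigenvalue of the Laplacian of the q-triangulation R_q(G), with eigenvector (x; yBᵀx; ...; yBᵀx) (q copies of yBᵀx). -/
/-!
For an `r`-regular graph the incidence matrix satisfies `B Bᵀ = rI + A = 2rI - L`, so `Bᵀx`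
carries the eigen-equation of `x`: the block matrix sends `(x; yBᵀx; …; yBᵀx)` to
`((qr + λ - qy(2r - λ)) x; (2y - 1) Bᵀx; …)`. This is `f` times the vector as soon as
`f = qr + λ - q(2r - λ)y` and `(2 - f)y = 1`, i.e. when `f` is a root of
`f² - (qr + λ + 2)f + 2(qr + λ) - q(2r - λ)`, whose discriminant is `μ`. The root is real since
`(2r - λ)‖x‖² = ‖Bᵀx‖² ≥ 0`.
-/

open Matrix

namespace SimpleGraph

variable {V : Type*} [Fintype V] [DecidableEq V] (G : SimpleGraph V) [DecidableRel G.Adj]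

theorem incMatrix_mul_transpose_of_isRegularOfDegree {R : Type*} [Ring R] {r : ℕ}
    (hreg : G.IsRegularOfDegree r) :
    G.incMatrix R * (G.incMatrix R)ᵀ = (r : R) • 1 + G.adjMatrix R := by
  rw [incMatrix_mul_transpose]
  ext u v
  by_cases huv : u = v
  · subst huv
    simp [hreg u]
  · simp [huv, adjMatrix_apply]

theorem mul_transpose_eq_incMatrix_mul_transpose [Fintype G.edgeSet] {R : Type*} [Ring R]
    (B : Matrix V G.edgeSet R)
    (hB : ∀ (v : V) (e : G.edgeSet), B v e = if v ∈ (e : Sym2 V) then 1 else 0) :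
    B * Bᵀ = G.incMatrix R * (G.incMatrix R)ᵀ := by
  have hBinc : ∀ v e, B v e = G.incMatrix R v e := fun v e => by
    simp [hB, incMatrix_apply', incidenceSet, e.2]
  ext u v
  simp only [mul_apply, transpose_apply, hBinc]
  rw [← Finset.sum_subtype G.edgeFinset (fun _ => mem_edgeFinset)
    (fun e => G.incMatrix R u e * G.incMatrix R v e)]
  refine Finset.sum_subset (Finset.subset_univ _) fun e _ he => ?_
  rw [G.incMatrix_of_notMem_incidenceSet fun h => he (mem_edgeFinset.2 h.1), zero_mul]

end SimpleGraph

theorem Matrix.nonneg_of_mul_transpose_mulVec_eq_smul {m n : Type*} [Fintype m] [Fintype n]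
    {B : Matrix m n ℝ} {x : m → ℝ} {c : ℝ} (hx : x ≠ 0) (h : (B * Bᵀ) *ᵥ x = c • x) :
    0 ≤ c := by
  have hquad : c * (x ⬝ᵥ x) = (Bᵀ *ᵥ x) ⬝ᵥ (Bᵀ *ᵥ x) := by
    rw [← smul_eq_mul, ← dotProduct_smul, ← h, ← mulVec_mulVec, dotProduct_mulVec,
      ← mulVec_transpose]
  have hxx : 0 < x ⬝ᵥ x := by simpa using dotProduct_star_self_pos_iff.2 hx
  have hw : 0 ≤ (Bᵀ *ᵥ x) ⬝ᵥ (Bᵀ *ᵥ x) := by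
    simpa using dotProduct_star_self_nonneg (Bᵀ *ᵥ x)
  exact nonneg_of_mul_nonneg_left (hquad ▸ hw) hxx

theorem Matrix.fromBlocks_replicate_mulVec {V E : Type*} [Fintype V] [Fintype E] [DecidableEq E]
    (q : ℕ) (A : Matrix V V ℝ) (B : Matrix V E ℝ) (d y : ℝ) (x : V → ℝ) :
    fromBlocks A (of fun v p => -B v p.2) (of fun p v => -B v p.2)
        (d • (1 : Matrix (Fin q × E) (Fin q × E) ℝ)) *ᵥ
        Sum.elim x (fun p : Fin q × E => y * (Bᵀ *ᵥ x) p.2)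
      = Sum.elim (A *ᵥ x - (q * y) • ((B * Bᵀ) *ᵥ x)) (fun p => (d * y - 1) * (Bᵀ *ᵥ x) p.2) := by
  rw [fromBlocks_mulVec, Sum.elim_comp_inl, Sum.elim_comp_inr]
  congr 1
  · ext v
    simp only [Pi.add_apply, Pi.sub_apply, Pi.smul_apply, smul_eq_mul, mulVec, dotProduct,
      Fintype.sum_prod_type, of_apply, mul_apply, transpose_apply, Finset.sum_const,
      Finset.card_univ, Fintype.card_fin, nsmul_eq_mul, Finset.mul_sum, Finset.sum_mul]
    rw [sub_eq_add_neg, ← Finset.sum_neg_distrib, Finset.sum_comm]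
    congr 1
    refine Finset.sum_congr rfl fun e _ => ?_
    rw [← Finset.sum_neg_distrib]
    refine Finset.sum_congr rfl fun i _ => by ring
  · ext p
    rw [smul_mulVec, one_mulVec]
    simp only [mulVec, dotProduct, transpose_apply, Pi.add_apply, of_apply, neg_mul,
      Finset.sum_neg_distrib, Pi.smul_apply, smul_eq_mul]
    ring

theorem q_triangulation_eigenvalue_relations {s c q ε μ y f : ℝ} (hqc : 0 < q * c)
    (hε : ε ^ 2 = 1) (hμ : μ = (s - 2) ^ 2 + 4 * q * c)
    (hy : y = (s - 2 - ε * √μ) / (2 * q * c)) (hf : f = (1 / 2) * (s + 2 + ε * √μ)) :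
    s - q * c * y = f ∧ (2 - f) * y = 1 := by
  have hμ0 : 0 ≤ μ := by rw [hμ]; nlinarith [sq_nonneg (s - 2)]
  have hroot : (ε * √μ) ^ 2 = μ := by rw [mul_pow, hε, one_mul, Real.sq_sqrt hμ0]
  have hyq : 2 * q * c * y = s - 2 - ε * √μ := by
    have hD : 2 * q * c ≠ 0 := by rw [mul_assoc]; exact mul_ne_zero two_ne_zero hqc.ne'
    rw [hy, mul_div_cancel₀ _ hD]
  constructor
  · rw [hf]; linear_combination (-1 / 2 : ℝ) * hyq
  · apply mul_left_cancel₀ hqc.ne'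
    rw [hf]
    linear_combination (2 - s - ε * √μ) / 4 * hyq + (1 / 4 : ℝ) * hroot + (1 / 4 : ℝ) * hμ

theorem q_triangulation_nonbipartite_eigenvalues_general {V : Type*} [Fintype V] [DecidableEq V]
    (G : SimpleGraph V) [DecidableRel G.Adj] [Fintype G.edgeSet]
    (r : ℕ) (hreg : G.IsRegularOfDegree r)
    (B : Matrix V G.edgeSet ℝ)
    (hB : ∀ (v : V) (e : G.edgeSet), B v e = if v ∈ (e : Sym2 V) then 1 else 0)
    (L : Matrix V V ℝ) (hL : L = (r : ℝ) • (1 : Matrix V V ℝ) - G.adjMatrix ℝ)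
    (lam : ℝ) (x : V → ℝ) (hx : x ≠ 0) (heig : L.mulVec x = lam • x)
    (hlam : lam ≠ 2 * r)
    (q : ℕ) (hq : 1 ≤ q)
    (M : Matrix (V ⊕ (Fin q × G.edgeSet)) (V ⊕ (Fin q × G.edgeSet)) ℝ)
    (hM : M = Matrix.fromBlocks
      (((q * r : ℕ) : ℝ) • (1 : Matrix V V ℝ) + L)
      (Matrix.of fun v p => -B v p.2)
      (Matrix.of fun p v => -B v p.2)
      ((2 : ℝ) • (1 : Matrix (Fin q × G.edgeSet) (Fin q × G.edgeSet) ℝ)))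
    (ε : ℝ) (hε : ε = 1 ∨ ε = -1)
    (μ y f : ℝ)
    (hμ : μ = (q * r + lam - 2) ^ 2 + 4 * q * (2 * r - lam))
    (hy : y = (q * r + lam - 2 - ε * Real.sqrt μ) / (2 * q * (2 * r - lam)))
    (hf : f = (1 / 2) * (q * r + lam + 2 + ε * Real.sqrt μ)) :
    M.mulVec (Sum.elim x (fun p => y * B.transpose.mulVec x p.2))
      = f • Sum.elim x (fun p => y * B.transpose.mulVec x p.2) := by
  have hBBt : (B * Bᵀ) *ᵥ x = (2 * r - lam) • x := by
    have hsignless : (r : ℝ) • 1 + G.adjMatrix ℝ = (2 * r : ℝ) • 1 - L := by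
      rw [hL]; module
    rw [G.mul_transpose_eq_incMatrix_mul_transpose B hB,
      G.incMatrix_mul_transpose_of_isRegularOfDegree hreg, hsignless, sub_mulVec, smul_mulVec, one_mulVec, heig, sub_smul]
  have hA : (((q * r : ℕ) : ℝ) • 1 + L) *ᵥ x = (q * r + lam) • x := by
    rw [add_mulVec, smul_mulVec, one_mulVec, heig, add_smul, Nat.cast_mul]
  have hc : 0 < 2 * r - lam :=
    (nonneg_of_mul_transpose_mulVec_eq_smul hx hBBt).lt_of_ne (sub_ne_zero.2 hlam.symm).symm
  have hq0 : (0 : ℝ) < q := by exact_mod_cast hq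
  have hε2 : ε ^ 2 = 1 := by rcases hε with rfl | rfl <;> norm_num
  obtain ⟨htop, hbottom⟩ := q_triangulation_eigenvalue_relations (mul_pos hq0 hc) hε2 hμ hy hf
  rw [hM, fromBlocks_replicate_mulVec, hA, hBBt]
  ext (v | p)
  · simp only [Sum.elim_inl, Pi.sub_apply, Pi.smul_apply, smul_eq_mul]
    linear_combination x v * htop
  · simp only [Sum.elim_inr, Pi.smul_apply, smul_eq_mul]
    linear_combination (Bᵀ *ᵥ x) p.2 * hbottom

/-- Non-bipartite branch of the `q`-triangulation eigenvalue theorem. Let `G` be a simple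
connected non-bipartite `r`-regular graph with Laplacian eigenpair `(λ, x)`, `λ ≠ 2r`,
incidence matrix `B`, and let `M` be the Laplacian of `R_q(G)` in block form (top-left
`qrI + L`, off-diagonal blocks `-B`, `-Bᵀ`, diagonal blocks `2I`). Then
`f(λ) = (1/2)(qr + λ + 2 ± √μ)`, with `μ = (qr + λ - 2)² + 4q(2r - λ)`, is an eigenvalue of
`M` with eigenvector `(x; yBᵀx; …; yBᵀx)`, where `y = (qr + λ - 2 ∓ √μ)/(2q(2r - λ))`. -/
theorem q_triangulation_nonbipartite_eigenvalues {V : Type*} [Fintype V] [DecidableEq V]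
    (G : SimpleGraph V) [DecidableRel G.Adj] [Fintype G.edgeSet]
    (hconn : G.Connected)
    (hnonbip : ¬ ∃ s : Set V, ∀ a b, G.Adj a b → (a ∈ s ↔ b ∉ s))
    (r : ℕ) (hreg : G.IsRegularOfDegree r)
    (B : Matrix V G.edgeSet ℝ)
    (hB : ∀ (v : V) (e : G.edgeSet), B v e = if v ∈ (e : Sym2 V) then 1 else 0)
    (L : Matrix V V ℝ) (hL : L = (r : ℝ) • (1 : Matrix V V ℝ) - G.adjMatrix ℝ)
    (lam : ℝ) (x : V → ℝ) (hx : x ≠ 0) (heig : L.mulVec x = lam • x)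
    (hlam : lam ≠ 2 * r)
    (q : ℕ) (hq : 1 ≤ q)
    (M : Matrix (V ⊕ (Fin q × G.edgeSet)) (V ⊕ (Fin q × G.edgeSet)) ℝ)
    (hM : M = Matrix.fromBlocks
      (((q * r : ℕ) : ℝ) • (1 : Matrix V V ℝ) + L)
      (Matrix.of fun v p => -B v p.2)
      (Matrix.of fun p v => -B v p.2)
      ((2 : ℝ) • (1 : Matrix (Fin q × G.edgeSet) (Fin q × G.edgeSet) ℝ)))
    (ε : ℝ) (hε : ε = 1 ∨ ε = -1)
    (μ y f : ℝ)
    (hμ : μ = (q * r + lam - 2) ^ 2 + 4 * q * (2 * r - lam))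
    (hy : y = (q * r + lam - 2 - ε * Real.sqrt μ) / (2 * q * (2 * r - lam)))
    (hf : f = (1 / 2) * (q * r + lam + 2 + ε * Real.sqrt μ)) :
    M.mulVec (Sum.elim x (fun p => y * B.transpose.mulVec x p.2))
      = f • Sum.elim x (fun p => y * B.transpose.mulVec x p.2) :=
  q_triangulation_nonbipartite_eigenvalues_general G r hreg B hB L hL lam x hx heig hlam q hq M hM ε
    hε μ y f hμ hy hf
end

section
/- Let G be a simple connected r-regular graph with n vertices and m edges and incidence matrix B, and let R_q(G) be its q-triangulation. If G is non-bipartite, then 2 is an eigenvalue of L(R_q(G)) with multiplicity at least mq - n, with eigenvectors (0; V) for V in the null space of the n×mq matrix C = (B B ⋯ B). -/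
/-- Non-bipartite case: `2` is an eigenvalue of the Laplacian of the `q`-triangulation
`R_q(G)` with multiplicity at least `mq - n`; the vectors `(0; V)` with `V` in the null
space of `C = (B B ⋯ B)` are eigenvectors for eigenvalue `2`. -/
theorem q_triangulation_eigenvalue_two_nonbipartite {V : Type*} [Fintype V] [DecidableEq V]
    (G : SimpleGraph V) [DecidableRel G.Adj] [Fintype G.edgeSet]
    (hconn : G.Connected)
    (hnonbip : ¬ ∃ s : Set V, ∀ a b, G.Adj a b → (a ∈ s ↔ b ∉ s))
    (r : ℕ) (hreg : G.IsRegularOfDegree r)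
    (B : Matrix V G.edgeSet ℝ)
    (hB : ∀ (v : V) (e : G.edgeSet), B v e = if v ∈ (e : Sym2 V) then 1 else 0)
    (L : Matrix V V ℝ) (hL : L = (r : ℝ) • (1 : Matrix V V ℝ) - G.adjMatrix ℝ)
    (q : ℕ) (hq : 1 ≤ q)
    (M : Matrix (V ⊕ (Fin q × G.edgeSet)) (V ⊕ (Fin q × G.edgeSet)) ℝ)
    (hM : M = Matrix.fromBlocks
      (((q * r : ℕ) : ℝ) • (1 : Matrix V V ℝ) + L)
      (Matrix.of fun v p => -B v p.2)
      (Matrix.of fun p v => -B v p.2)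
      ((2 : ℝ) • (1 : Matrix (Fin q × G.edgeSet) (Fin q × G.edgeSet) ℝ)))
    (C : Matrix V (Fin q × G.edgeSet) ℝ) (hC : ∀ v p, C v p = B v p.2) :
    (∀ w : Fin q × G.edgeSet → ℝ, C.mulVec w = 0 →
      M.mulVec (Sum.elim (0 : V → ℝ) w) = (2 : ℝ) • Sum.elim (0 : V → ℝ) w) ∧
    Fintype.card G.edgeSet * q - Fintype.card V ≤
      Module.finrank ℝ (Module.End.eigenspace (Matrix.toLin' M) (2 : ℝ)) := by
  have hCB : (Matrix.of fun v (p : Fin q × G.edgeSet) => -B v p.2) = -C := by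
    ext v p; simp [hC]
  have key : ∀ w : Fin q × G.edgeSet → ℝ, C.mulVec w = 0 →
      M.mulVec (Sum.elim (0 : V → ℝ) w) = (2 : ℝ) • Sum.elim (0 : V → ℝ) w := by
    intro w hw
    subst hM
    rw [Matrix.fromBlocks_mulVec]
    funext i
    cases i with
    | inl v =>
        simp only [Sum.elim_inl, Pi.add_apply, Matrix.mulVec_zero, Pi.zero_apply,
          Pi.smul_apply, smul_eq_mul, mul_zero, zero_add]
        rw [hCB]
        simp [Matrix.neg_mulVec, hw]
    | inr p =>
        simp [Matrix.mulVec_zero, Matrix.smul_mulVec]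
  refine ⟨key, ?_⟩
  -- linear map w ↦ Sum.elim 0 w
  let φ : ((Fin q × G.edgeSet) → ℝ) →ₗ[ℝ] ((V ⊕ (Fin q × G.edgeSet)) → ℝ) :=
    { toFun := fun w => Sum.elim 0 w
      map_add' := by intro a b; funext i; cases i <;> simp
      map_smul' := by intro c a; funext i; cases i <;> simp }
  have hφinj : Function.Injective φ := by
    intro a b h
    funext p
    have := congrFun h (Sum.inr p)
    simpa [φ] using this
  have hle : (LinearMap.ker C.mulVecLin).map φ ≤
      Module.End.eigenspace (Matrix.toLin' M) (2 : ℝ) := by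
    rintro x ⟨w, hw, rfl⟩
    rw [Module.End.mem_eigenspace_iff]
    have := key w (by simpa [Matrix.mulVecLin] using hw)
    simpa [φ, Matrix.toLin'_apply] using this
  have h1 : Module.finrank ℝ (LinearMap.ker C.mulVecLin) ≤
      Module.finrank ℝ (Module.End.eigenspace (Matrix.toLin' M) (2 : ℝ)) := by
    refine LinearMap.finrank_le_finrank_of_injective
      (f := LinearMap.codRestrict _ (φ.domRestrict (LinearMap.ker C.mulVecLin))
        (fun x => hle ⟨x.1, x.2, rfl⟩)) ?_
    intro a b h
    have h2 : φ a.1 = φ b.1 := congrArg Subtype.val h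
    exact Subtype.ext (hφinj h2)
  refine le_trans ?_ h1
  have hrank : Module.finrank ℝ (LinearMap.range C.mulVecLin)
      + Module.finrank ℝ (LinearMap.ker C.mulVecLin)
      = Fintype.card (Fin q × G.edgeSet) := by
    rw [LinearMap.finrank_range_add_finrank_ker]
    simp [Module.finrank_fintype_fun_eq_card]
  have hcard : Fintype.card (Fin q × G.edgeSet) = Fintype.card G.edgeSet * q := by
    simp [Fintype.card_prod, mul_comm]
  have hrk_le : Module.finrank ℝ (LinearMap.range C.mulVecLin) ≤ Fintype.card V := by
    have := Matrix.rank_le_card_height C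
    simpa [Matrix.rank] using this
  omega
end

section
/- Let G be a simple connected bipartite r-regular graph with n vertices, m edges, and incidence matrix B. Then 2 is an eigenvalue of L(R_q(G)) with multiplicity at least mq - n + 1. -/
/-- Bipartite case: for a simple connected bipartite `r`-regular graph `G` with `n` vertices
and `m` edges, `2` is an eigenvalue of the Laplacian of the `q`-triangulation `R_q(G)` with
multiplicity at least `mq - n + 1`. -/
theorem q_triangulation_eigenvalue_two_bipartite {V : Type*} [Fintype V] [DecidableEq V]
    (G : SimpleGraph V) [DecidableRel G.Adj] [Fintype G.edgeSet]
    (hconn : G.Connected)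
    (s : Set V) (hbip : ∀ a b, G.Adj a b → (a ∈ s ↔ b ∉ s))
    (r : ℕ) (hreg : G.IsRegularOfDegree r)
    (B : Matrix V G.edgeSet ℝ)
    (hB : ∀ (v : V) (e : G.edgeSet), B v e = if v ∈ (e : Sym2 V) then 1 else 0)
    (L : Matrix V V ℝ) (hL : L = (r : ℝ) • (1 : Matrix V V ℝ) - G.adjMatrix ℝ)
    (q : ℕ) (hq : 1 ≤ q)
    (M : Matrix (V ⊕ (Fin q × G.edgeSet)) (V ⊕ (Fin q × G.edgeSet)) ℝ)
    (hM : M = Matrix.fromBlocks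
      (((q * r : ℕ) : ℝ) • (1 : Matrix V V ℝ) + L)
      (Matrix.of fun v p => -B v p.2)
      (Matrix.of fun p v => -B v p.2)
      ((2 : ℝ) • (1 : Matrix (Fin q × G.edgeSet) (Fin q × G.edgeSet) ℝ))) :
    Fintype.card G.edgeSet * q + 1 - Fintype.card V ≤
      Module.finrank ℝ (Module.End.eigenspace (Matrix.toLin' M) (2 : ℝ)) := by
  classical
  set f : Matrix V (Fin q × G.edgeSet) ℝ := Matrix.of fun v p => B v p.2 with hf
  set σ : V → ℝ := fun v => if v ∈ s then 1 else -1 with hσ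
  have hσ_ne : σ ≠ 0 := by
    obtain ⟨v⟩ := hconn.nonempty
    intro h
    have := congrFun h v
    by_cases hv : v ∈ s <;> simp [hσ, hv] at this
  -- key sum computation on each edge
  have key : ∀ e : Sym2 V, e ∈ G.edgeSet →
      ∑ v, (if v ∈ e then (1:ℝ) else 0) * σ v = 0 := by
    intro e
    induction e using Sym2.ind with
    | _ a b =>
      intro he
      have hadj : G.Adj a b := he
      have hab : a ≠ b := hadj.ne
      have hpt : ∀ v, (if v ∈ s(a,b) then (1:ℝ) else 0) * σ v =
          (if v = a then σ v else 0) + (if v = b then σ v else 0) := by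
        intro v
        by_cases h1 : v = a <;> by_cases h2 : v = b <;>
          simp_all [Sym2.mem_iff]
      rw [Finset.sum_congr rfl fun v _ => hpt v, Finset.sum_add_distrib]
      rw [Finset.sum_ite_eq' Finset.univ a σ, Finset.sum_ite_eq' Finset.univ b σ]
      have hb := hbip a b hadj
      by_cases ha : a ∈ s
      · have : b ∉ s := hb.mp ha
        simp [hσ, ha, this]
      · have : b ∈ s := by
          by_contra hbs
          exact ha (hb.mpr hbs)
        simp [hσ, ha, this]
  have hσ_ker : σ ∈ LinearMap.ker (Matrix.mulVecLin f.transpose) := by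
    rw [LinearMap.mem_ker]
    funext p
    obtain ⟨i, e⟩ := p
    have hk := key (e : Sym2 V) e.2
    simp only [Matrix.mulVecLin_apply, Matrix.mulVec, dotProduct,
      Matrix.transpose_apply, hf, Matrix.of_apply, hB, Pi.zero_apply]
    exact hk
  -- rank bound
  have h1 := LinearMap.finrank_range_add_finrank_ker (Matrix.mulVecLin f.transpose)
  rw [Module.finrank_fintype_fun_eq_card] at h1
  have h2 : 0 < Module.finrank ℝ (LinearMap.ker (Matrix.mulVecLin f.transpose)) := by
    have : Nontrivial (LinearMap.ker (Matrix.mulVecLin f.transpose)) := by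
      refine nontrivial_of_ne ⟨σ, hσ_ker⟩ 0 ?_
      intro h
      exact hσ_ne (congrArg Subtype.val h)
    exact Module.finrank_pos
  have h3 : f.transpose.rank = f.rank := Matrix.rank_transpose f
  have hrt : f.transpose.rank = Module.finrank ℝ (LinearMap.range (Matrix.mulVecLin f.transpose)) := rfl
  have hrf : f.rank = Module.finrank ℝ (LinearMap.range (Matrix.mulVecLin f)) := rfl
  have h4 := LinearMap.finrank_range_add_finrank_ker (Matrix.mulVecLin f)
  rw [Module.finrank_fintype_fun_eq_card, Fintype.card_prod, Fintype.card_fin] at h4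
  -- the kernel embeds in the eigenspace
  let g : ((Fin q × G.edgeSet) → ℝ) →ₗ[ℝ] ((V ⊕ (Fin q × G.edgeSet)) → ℝ) :=
    { toFun := fun y => Sum.elim (0 : V → ℝ) y
      map_add' := by intro y z; funext x; cases x <;> simp
      map_smul' := by intro c y; funext x; cases x <;> simp }
  have hg : ∀ y, g y = Sum.elim (0 : V → ℝ) y := fun _ => rfl
  have hmem : ∀ y ∈ LinearMap.ker (Matrix.mulVecLin f),
      Sum.elim (0 : V → ℝ) y ∈ Module.End.eigenspace (Matrix.toLin' M) (2:ℝ) := by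
    intro y hy
    rw [Module.End.mem_eigenspace_iff, Matrix.toLin'_apply, hM,
      Matrix.fromBlocks_mulVec]
    have hy' : f.mulVec y = 0 := hy
    have hneg : (Matrix.of fun v (p : Fin q × G.edgeSet) => -B v p.2) = -f := by
      funext v p; simp [hf]
    funext x
    cases x with
    | inl v =>
      simp [Sum.elim_comp_inl, Sum.elim_comp_inr, hneg, Matrix.neg_mulVec, hy',
        Matrix.mulVec_zero]
    | inr p =>
      simp [Sum.elim_comp_inl, Sum.elim_comp_inr, Matrix.mulVec_zero,
        Matrix.smul_mulVec, Matrix.one_mulVec]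
  let φ : (LinearMap.ker (Matrix.mulVecLin f)) →ₗ[ℝ]
      (Module.End.eigenspace (Matrix.toLin' M) (2:ℝ)) :=
    LinearMap.codRestrict _ (g ∘ₗ (LinearMap.ker (Matrix.mulVecLin f)).subtype)
      (fun y => by simpa [hg] using hmem y.1 y.2)
  have hinj : Function.Injective φ := by
    intro y z h
    have h' : g y.1 = g z.1 := congrArg Subtype.val h
    have : y.1 = z.1 := by
      funext p
      have := congrFun h' (Sum.inr p)
      simpa [hg] using this
    exact Subtype.ext this
  have hle := LinearMap.finrank_le_finrank_of_injective hinj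
  have hcomm : q * Fintype.card G.edgeSet = Fintype.card G.edgeSet * q := Nat.mul_comm _ _
  omega
end

section
/- For the r-regular ring network on n vertices with r even and 2 ≤ r < n, the second smallest Laplacian eigenvalue is λ_1 = r + 1 - sin((r+1)π/n)/sin(π/n), i.e., among λ_k = r + 1 - sin((r+1)πk/n)/sin(πk/n) for k = 1, ..., n-1, the value at k = 1 is minimal. -/
/-!
Write `m = r + 1`, `x = π / n` and `D_s(t) = sin (s t) / sin t`; the claim is `D_m(k x) ≤ D_m(x)`.
As `m` is odd, `D_m(π - t) = D_m(t)`, so we may assume `2k ≤ n`, i.e. `k x ≤ π / 2`. If `n < 2m`,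
then `n x = π` turns `sin (m t)` into `± sin ((n - m) t)` at both points. Either way it suffices that
`|D_s(y)| ≤ D_s(x)` whenever `x ≤ y ≤ π / 2` and `s x ≤ π / 2`. For `y ≤ π / s` this is the
antitonicity of `D_s` on `(0, π / s]`; beyond `π / s`, Jordan's inequality `sin t ≥ 2t / π` gives
`|D_s(y)| ≤ s / 2 < 2s / π ≤ D_s(x)`.
-/

open Real Set

namespace Real

lemma mul_cos_mul_mul_sin_le {s x : ℝ} (hs : 1 ≤ s) (hx : 0 ≤ x) (hsx : s * x ≤ π) :
    s * (cos (s * x) * sin x) ≤ sin (s * x) * cos x := by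
  set φ : ℝ → ℝ := fun y => sin (s * y) * cos y - s * (cos (s * y) * sin y)
  -- `φ' y = (s ^ 2 - 1) sin (s y) sin y`, which is nonnegative while `s y ≤ π`.
  have hφ' (y : ℝ) : HasDerivAt φ ((s ^ 2 - 1) * (sin (s * y) * sin y)) y := by
    have hlin : HasDerivAt (fun y => s * y) s y := by simpa using (hasDerivAt_id y).const_mul s
    have h := ((hlin.sin.mul (hasDerivAt_cos y)).sub
      ((hlin.cos.mul (hasDerivAt_sin y)).const_mul s))
    exact h.congr_deriv (by ring)
  have hmono : MonotoneOn φ (Icc 0 x) := by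
    refine monotoneOn_of_deriv_nonneg (convex_Icc 0 x)
      (Continuous.continuousOn (by fun_prop))
      (fun y _ => (hφ' y).differentiableAt.differentiableWithinAt) fun y hy => ?_
    rw [interior_Icc] at hy
    have hsy : s * y ≤ π := (mul_le_mul_of_nonneg_left hy.2.le (by linarith)).trans hsx
    rw [(hφ' y).deriv]
    have h1 : 0 ≤ sin (s * y) := sin_nonneg_of_nonneg_of_le_pi (by nlinarith [hy.1]) hsy
    have h2 : 0 ≤ sin y := sin_nonneg_of_nonneg_of_le_pi hy.1.le (by nlinarith [hy.1])
    have h3 : 0 ≤ s ^ 2 - 1 := by nlinarith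
    positivity
  have h := hmono ⟨le_rfl, hx⟩ ⟨hx, le_rfl⟩ hx
  simp only [φ, mul_zero, sin_zero, cos_zero] at h
  linarith

lemma antitoneOn_sin_mul_div_sin {s : ℝ} (hs : 1 < s) :
    AntitoneOn (fun x => sin (s * x) / sin x) (Ioc 0 (π / s)) := by
  have hs0 : 0 < s := by linarith
  have hsin : ∀ x ∈ Ioc 0 (π / s), 0 < sin x := fun x hx =>
    sin_pos_of_pos_of_lt_pi hx.1 (hx.2.trans_lt (div_lt_self pi_pos hs))
  have hderiv : ∀ x ∈ Ioc 0 (π / s), HasDerivAt (fun x => sin (s * x) / sin x)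
      ((s * cos (s * x) * sin x - sin (s * x) * cos x) / sin x ^ 2) x := by
    intro x hx
    have hlin : HasDerivAt (fun y => s * y) s x := by simpa using (hasDerivAt_id x).const_mul s
    exact (hlin.sin.div (hasDerivAt_sin x) (hsin x hx).ne').congr_deriv (by ring)
  refine antitoneOn_of_deriv_nonpos (convex_Ioc 0 (π / s))
    (ContinuousOn.div (by fun_prop) (by fun_prop) fun x hx => (hsin x hx).ne')
    (fun x hx => ?_) fun x hx => ?_ <;> rw [interior_Ioc] at hx
  · exact (hderiv x (Ioo_subset_Ioc_self hx)).differentiableAt.differentiableWithinAt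
  · rw [(hderiv x (Ioo_subset_Ioc_self hx)).deriv]
    have hsx : s * x ≤ π := (le_div_iff₀' hs0).mp hx.2.le
    have := mul_cos_mul_mul_sin_le hs.le hx.1.le hsx
    exact div_nonpos_of_nonpos_of_nonneg (by linarith) (sq_nonneg _)

lemma two_mul_div_pi_le_sin_mul_div_sin {s x : ℝ} (hs : 1 ≤ s) (hx : 0 < x)
    (hsx : s * x ≤ π / 2) : 2 * s / π ≤ sin (s * x) / sin x := by
  have hsin : 0 < sin x := sin_pos_of_pos_of_lt_pi hx (by nlinarith [pi_pos])
  rw [le_div_iff₀ hsin]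
  calc 2 * s / π * sin x ≤ 2 * s / π * x := by gcongr; exact sin_le hx.le
    _ = 2 / π * (s * x) := by ring
    _ ≤ sin (s * x) := mul_le_sin (by positivity) hsx

lemma abs_sin_mul_div_sin_le_half {s y : ℝ} (hs : 0 < s) (hsy : π / s ≤ y) (hy : y ≤ π / 2) :
    |sin (s * y) / sin y| ≤ s / 2 := by
  have hπs : 0 < π / s := by positivity
  have hsin : 2 / s ≤ sin y :=
    calc 2 / s = 2 / π * (π / s) := by field_simp
      _ ≤ sin (π / s) := mul_le_sin hπs.le (hsy.trans hy)
      _ ≤ sin y := sin_le_sin_of_le_of_le_pi_div_two (by linarith) hy hsy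
  have hsin0 : 0 < sin y := (by positivity : (0 : ℝ) < 2 / s).trans_le hsin
  rw [abs_div, abs_of_pos hsin0, div_le_iff₀ hsin0]
  calc |sin (s * y)| ≤ 1 := abs_sin_le_one _
    _ = s / 2 * (2 / s) := by field_simp
    _ ≤ s / 2 * sin y := by gcongr

lemma abs_sin_nat_mul_div_sin_le (s : ℕ) {x y : ℝ} (hx : 0 < x) (hsx : s * x ≤ π / 2)
    (hxy : x ≤ y) (hy : y ≤ π / 2) : |sin (s * y) / sin y| ≤ sin (s * x) / sin x := by
  have hy0 : 0 < y := hx.trans_le hxy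
  obtain rfl | rfl | hs := (by omega : s = 0 ∨ s = 1 ∨ 2 ≤ s)
  · simp
  · have hsinx : sin x ≠ 0 := (sin_pos_of_pos_of_lt_pi hx (by linarith [pi_pos])).ne'
    have hsiny : sin y ≠ 0 := (sin_pos_of_pos_of_lt_pi hy0 (by linarith [pi_pos])).ne'
    simp [hsinx, hsiny]
  have hs1 : (1 : ℝ) < s := by exact_mod_cast hs
  have hs0 : (0 : ℝ) < s := by linarith
  by_cases hys : y ≤ π / s
  · have hsy : s * y ≤ π := (le_div_iff₀' hs0).mp hys
    have hxs : x ≤ π / s := hxy.trans hys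
    rw [abs_of_nonneg (div_nonneg (sin_nonneg_of_nonneg_of_le_pi (by positivity) hsy)
      (sin_nonneg_of_nonneg_of_le_pi hy0.le (by linarith [pi_pos])))]
    exact antitoneOn_sin_mul_div_sin hs1 ⟨hx, hxs⟩ ⟨hy0, hys⟩ hxy
  · calc |sin (s * y) / sin y| ≤ s / 2 := abs_sin_mul_div_sin_le_half hs0 (by linarith) hy
      _ ≤ 2 * s / π := by
        rw [div_le_div_iff₀ two_pos pi_pos]; nlinarith [pi_le_four]
      _ ≤ sin (s * x) / sin x := two_mul_div_pi_le_sin_mul_div_sin hs1.le hx hsx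

lemma sin_nat_mul_div_sin_le {m n k : ℕ} (hmn : m ≤ n) (hk : 1 ≤ k) (hkn : 2 * k ≤ n) :
    sin (m * (π * k / n)) / sin (π * k / n) ≤ sin (m * (π / n)) / sin (π / n) := by
  have hn : (0 : ℝ) < n := by exact_mod_cast (by omega : 0 < n)
  set x := π / n with hxdef
  have hx : 0 < x := by positivity
  have hhalf (a : ℕ) (ha : 2 * a ≤ n) : (a : ℝ) * x ≤ π / 2 := by
    have : (2 * a : ℝ) ≤ n := by exact_mod_cast ha
    rw [hxdef, mul_div_assoc', div_le_div_iff₀ hn two_pos]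
    nlinarith [pi_pos]
  have hxy : x ≤ k * x := le_mul_of_one_le_left hx.le (by exact_mod_cast hk)
  rw [show π * k / n = k * x by ring]
  refine (le_abs_self _).trans ?_
  by_cases hm : 2 * m ≤ n
  · exact abs_sin_nat_mul_div_sin_le m hx (hhalf m hm) hxy (hhalf k hkn)
  have hnx : (n : ℝ) * x = π := by rw [hxdef]; field_simp
  have hnm : ((n - m : ℕ) : ℝ) = n - m := Nat.cast_sub hmn
  have hmx : sin (m * x) = sin ((n - m : ℕ) * x) := by
    rw [← sin_pi_sub, hnm, ← hnx]; ring_nf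
  have hmkx : |sin (m * (k * x))| = |sin ((n - m : ℕ) * (k * x))| := by
    rw [show (m : ℝ) * (k * x) = k * π - (n - m : ℕ) * (k * x) by rw [hnm, ← hnx]; ring,
      sin_nat_mul_pi_sub, abs_neg, abs_mul, abs_pow, abs_neg, abs_one, one_pow, one_mul]
  rw [abs_div, hmkx, ← abs_div, hmx]
  exact abs_sin_nat_mul_div_sin_le (n - m) hx (hhalf (n - m) (by omega)) hxy (hhalf k hkn)

lemma sin_odd_mul_pi_sub_div_sin_pi_sub {m : ℕ} (hm : Odd m) (y : ℝ) :
    sin (m * (π - y)) / sin (π - y) = sin (m * y) / sin y := by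
  rw [sin_pi_sub, mul_sub, sin_nat_mul_pi_sub, hm.neg_one_pow]
  ring_nf

end Real

theorem ring_network_second_smallest_eigenvalue_general (n r : ℕ)
    (hre : Even r) (hrn : r < n) :
    ∀ k : ℕ, 1 ≤ k → k ≤ n - 1 →
      (r : ℝ) + 1 - Real.sin (((r : ℝ) + 1) * Real.pi / n) / Real.sin (Real.pi / n)
        ≤ (r : ℝ) + 1 - Real.sin (((r : ℝ) + 1) * Real.pi * k / n) / Real.sin (Real.pi * k / n) := by
  intro k hk hkn
  have hmn : r + 1 ≤ n := hrn
  have hcast (t : ℝ) : ((r : ℝ) + 1) * t = ((r + 1 : ℕ) : ℝ) * t := by push_cast; ring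
  rw [mul_div_assoc, mul_assoc, mul_div_assoc, hcast, hcast]
  apply sub_le_sub_left
  rcases le_or_gt (2 * k) n with hk2 | hk2
  · exact sin_nat_mul_div_sin_le hmn hk hk2
  have hn : (n : ℝ) ≠ 0 := Nat.cast_ne_zero.mpr (by omega)
  rw [show π * k / n = π - π * (n - k : ℕ) / n by rw [Nat.cast_sub (by omega)]; field_simp; ring,
    sin_odd_mul_pi_sub_div_sin_pi_sub hre.add_one]
  exact sin_nat_mul_div_sin_le hmn (by omega) (by omega)

/-- For the `r`-regular ring network on `n` vertices (`r` even, `2 ≤ r < n`), among the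
nonzero Laplacian eigenvalues `λ_k = r + 1 - sin((r+1)πk/n)/sin(πk/n)`, `k = 1, …, n-1`,
the value at `k = 1` is minimal; i.e. `λ_1` is the second smallest Laplacian eigenvalue. -/
theorem ring_network_second_smallest_eigenvalue (n r : ℕ)
    (hre : Even r) (hr : 2 ≤ r) (hrn : r < n) :
    ∀ k : ℕ, 1 ≤ k → k ≤ n - 1 →
      (r : ℝ) + 1 - Real.sin (((r : ℝ) + 1) * Real.pi / n) / Real.sin (Real.pi / n)
        ≤ (r : ℝ) + 1 - Real.sin (((r : ℝ) + 1) * Real.pi * k / n) / Real.sin (Real.pi * k / n) :=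
  ring_network_second_smallest_eigenvalue_general n r hre hrn
end
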